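/- In the super setting, assume V⁰ = ker(F⁻∘F⁺) ⊕ im(F⁻∘F⁺) and V¹ = ker(F⁺∘F⁻) ⊕ im(F⁺∘F⁻). Then every x ∈ im(F⁻∘F⁺) with d⁺x = 0 lies in d⁻(im(F⁺∘F⁻)), and every y ∈ im(F⁺∘F⁻) with d⁻y = 0 lies in d⁺(im(F⁻∘F⁺)). In other words, the cohomology of d restricted to the image of F² vanishes, so the index of (d⁺, d⁻) acting on im(F²) is 0. -/

import Mathlib

open LinearMap Module

/-- The quotient `ker S / (ker S ∩ im T)` appearing in the definition of a Fredholm pair. -/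
abbrev fredholmKerQuot {X Y : Type*} [AddCommGroup X] [Module ℂ X]
    [AddCommGroup Y] [Module ℂ Y] (S : X →ₗ[ℂ] Y) (T : Y →ₗ[ℂ] X) :=
  (LinearMap.ker S) ⧸ (Submodule.comap (LinearMap.ker S).subtype (LinearMap.range T))

/-- `(S, T)` is a Fredholm pair if `ker S / (ker S ∩ im T)` and `ker T / (ker T ∩ im S)`
are both finite dimensional. -/
def IsFredholmPair {X Y : Type*} [AddCommGroup X] [Module ℂ X]
    [AddCommGroup Y] [Module ℂ Y] (S : X →ₗ[ℂ] Y) (T : Y →ₗ[ℂ] X) : Prop :=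
  FiniteDimensional ℂ (fredholmKerQuot S T) ∧ FiniteDimensional ℂ (fredholmKerQuot T S)

/-- The index of a Fredholm pair:
`ind(S,T) = dim (ker S / (ker S ∩ im T)) - dim (ker T / (ker T ∩ im S))`. -/
noncomputable def fredholmIndex {X Y : Type*} [AddCommGroup X] [Module ℂ X]
    [AddCommGroup Y] [Module ℂ Y] (S : X →ₗ[ℂ] Y) (T : Y →ₗ[ℂ] X) : ℤ :=
  (Module.finrank ℂ (fredholmKerQuot S T) : ℤ) - (Module.finrank ℂ (fredholmKerQuot T S) : ℤ)

/-!
Write `A = F⁻F⁺ = d⁻∂⁺ + ∂⁻d⁺` and `B = F⁺F⁻`. Both `d⁺` and `∂⁺` intertwine `A` with `B`.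
Since `ker A + im A = V⁰`, every `x ∈ im A` is `A (A v)`. If `d⁺x = 0`, then
`d⁺(A v) = B (d⁺v)` lies in `ker B ∩ im B = 0`, so `x = d⁻(∂⁺(A v))` with `∂⁺(A v) = B (∂⁺v)`.
The second half is the first with the roles of `V⁰` and `V¹` exchanged.
-/

theorem LinearMap.range_comp_self_of_codisjoint {R M : Type*} [Semiring R] [AddCommMonoid M]
    [Module R M] {f : M →ₗ[R] M} (h : Codisjoint (ker f) (range f)) :
    range (f ∘ₗ f) = range f :=
  calc range (f ∘ₗ f) = (range f).map f := range_comp f f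
    _ = (ker f ⊔ range f).map f := by
      rw [Submodule.map_sup, le_ker_iff_map.mp le_rfl, bot_sup_eq]
    _ = range f := by rw [h.eq_top, Submodule.map_top]

section Super

variable {V₀ V₁ : Type*} [AddCommGroup V₀] [Module ℂ V₀] [AddCommGroup V₁] [Module ℂ V₁]
  {dp δp : V₀ →ₗ[ℂ] V₁} {dm δm : V₁ →ₗ[ℂ] V₀}

theorem super_F_sq_eq (hd : dm ∘ₗ dp = 0) (hδ : δm ∘ₗ δp = 0) :
    (dm + δm) ∘ₗ (dp + δp) = dm ∘ₗ δp + δm ∘ₗ dp := by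
  simp only [add_comp, comp_add, hd, hδ]
  abel

theorem super_dp_comp_F_sq (hd₁ : dm ∘ₗ dp = 0) (hd₂ : dp ∘ₗ dm = 0)
    (hδ₁ : δm ∘ₗ δp = 0) (hδ₂ : δp ∘ₗ δm = 0) :
    dp ∘ₗ ((dm + δm) ∘ₗ (dp + δp)) = ((dp + δp) ∘ₗ (dm + δm)) ∘ₗ dp := by
  rw [super_F_sq_eq hd₁ hδ₁, super_F_sq_eq hd₂ hδ₂, comp_add, add_comp, ← comp_assoc δp dm dp,
    hd₂, comp_assoc dp dm δp, hd₁, zero_comp, comp_zero, zero_add, add_zero, comp_assoc]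

theorem super_δp_comp_F_sq (hd₁ : dm ∘ₗ dp = 0) (hd₂ : dp ∘ₗ dm = 0)
    (hδ₁ : δm ∘ₗ δp = 0) (hδ₂ : δp ∘ₗ δm = 0) :
    δp ∘ₗ ((dm + δm) ∘ₗ (dp + δp)) = ((dp + δp) ∘ₗ (dm + δm)) ∘ₗ δp := by
  rw [super_F_sq_eq hd₁ hδ₁, super_F_sq_eq hd₂ hδ₂, comp_add, add_comp, ← comp_assoc dp δm δp,
    hδ₂, comp_assoc δp δm dp, hδ₁, zero_comp, comp_zero, add_zero, zero_add, comp_assoc]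

theorem super_mem_map_dm_range_of_dp_eq_zero (hd₁ : dm ∘ₗ dp = 0) (hd₂ : dp ∘ₗ dm = 0)
    (hδ₁ : δm ∘ₗ δp = 0) (hδ₂ : δp ∘ₗ δm = 0)
    (hspan₀ : Codisjoint (ker ((dm + δm) ∘ₗ (dp + δp))) (range ((dm + δm) ∘ₗ (dp + δp))))
    (hdisj₁ : Disjoint (ker ((dp + δp) ∘ₗ (dm + δm))) (range ((dp + δp) ∘ₗ (dm + δm))))
    {x : V₀} (hx : x ∈ range ((dm + δm) ∘ₗ (dp + δp))) (hdx : dp x = 0) :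
    x ∈ (range ((dp + δp) ∘ₗ (dm + δm))).map dm := by
  set A := (dm + δm) ∘ₗ (dp + δp)
  set B := (dp + δp) ∘ₗ (dm + δm)
  obtain ⟨v, rfl⟩ : x ∈ range (A ∘ₗ A) := (range_comp_self_of_codisjoint hspan₀).symm ▸ hx
  have hA (w : V₀) : A w = dm (δp w) + δm (dp w) := congr($(super_F_sq_eq hd₁ hδ₁) w)
  have hdp (w : V₀) : dp (A w) = B (dp w) := congr($(super_dp_comp_F_sq hd₁ hd₂ hδ₁ hδ₂) w)
  have hδp (w : V₀) : δp (A w) = B (δp w) := congr($(super_δp_comp_F_sq hd₁ hd₂ hδ₁ hδ₂) w)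
  have hdp_Av : dp (A v) = 0 := by
    refine Submodule.disjoint_def.mp hdisj₁ _ ?_ ⟨dp v, (hdp v).symm⟩
    rw [mem_ker, ← hdp]
    exact hdx
  refine ⟨δp (A v), ⟨δp v, (hδp v).symm⟩, ?_⟩
  show dm (δp (A v)) = A (A v)
  rw [hA (A v), hdp_Av, map_zero, add_zero]

end Super

/-- in the super setting, if `V⁰ = ker(F⁻∘F⁺) ⊕ im(F⁻∘F⁺)` and
`V¹ = ker(F⁺∘F⁻) ⊕ im(F⁺∘F⁻)`, then every `d⁺`-closed element of `im(F⁻∘F⁺)` lies in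
`d⁻(im(F⁺∘F⁻))`, and every `d⁻`-closed element of `im(F⁺∘F⁻)` lies in `d⁺(im(F⁻∘F⁺))`:
the cohomology of `d` restricted to `im(F²)` vanishes. -/
theorem super_cohomology_on_range_F_sq_vanishes {V₀ V₁ : Type*}
    [AddCommGroup V₀] [Module ℂ V₀] [AddCommGroup V₁] [Module ℂ V₁]
    (dp δp : V₀ →ₗ[ℂ] V₁) (dm δm : V₁ →ₗ[ℂ] V₀)
    (hd₁ : dm ∘ₗ dp = 0) (hd₂ : dp ∘ₗ dm = 0)
    (hδ₁ : δm ∘ₗ δp = 0) (hδ₂ : δp ∘ₗ δm = 0)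
    (hcompl₀ : IsCompl (LinearMap.ker ((dm + δm) ∘ₗ (dp + δp)))
      (LinearMap.range ((dm + δm) ∘ₗ (dp + δp))))
    (hcompl₁ : IsCompl (LinearMap.ker ((dp + δp) ∘ₗ (dm + δm)))
      (LinearMap.range ((dp + δp) ∘ₗ (dm + δm)))) :
    (∀ x : V₀, x ∈ LinearMap.range ((dm + δm) ∘ₗ (dp + δp)) → dp x = 0 →
      x ∈ Submodule.map dm (LinearMap.range ((dp + δp) ∘ₗ (dm + δm)))) ∧
    (∀ y : V₁, y ∈ LinearMap.range ((dp + δp) ∘ₗ (dm + δm)) → dm y = 0 →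
      y ∈ Submodule.map dp (LinearMap.range ((dm + δm) ∘ₗ (dp + δp)))) :=
  ⟨fun _ hx hdx => super_mem_map_dm_range_of_dp_eq_zero hd₁ hd₂ hδ₁ hδ₂
      hcompl₀.codisjoint hcompl₁.disjoint hx hdx,
    fun _ hy hdy => super_mem_map_dm_range_of_dp_eq_zero hd₂ hd₁ hδ₂ hδ₁
      hcompl₁.codisjoint hcompl₀.disjoint hy hdy⟩
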